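/- arXiv:1510.00843 — 6 statements merged into one kernel-verified Lean document; each statement's English description precedes it below -/
import Mathlib

section
/- If X_1, ..., X_n are nonnegative random variables with a common continuous distribution function F, and t(n,s) > 0 satisfies n·∫_0^{t(n,s)} x dF(x) = s, then E[max{|A| : A ⊆ [n], ∑_{i∈A} X_i ≤ s}] ≤ n·F(t(n,s)). -/
/-!
Fix `t > 0`. If `A` is feasible, i.e. `∑_{i ∈ A} x_i ≤ s`, then
`|A| t = ∑_{i ∈ A} (t - x_i) + ∑_{i ∈ A} x_i ≤ ∑_i (t - x_i)⁺ + s`.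
Taking expectations, `t · E[M_n*(s)] ≤ n E[(t - X)⁺] + s`, and for a law on `[0, ∞)`,
`E[(t - X)⁺] = t F(t) - ∫_{(0, t]} x dF(x)`. The choice `n ∫_{(0, t]} x dF(x) = s` makes the
right-hand side `n t F(t)`.
-/

open MeasureTheory ProbabilityTheory Set

/-- The Bruss-Robertson maximal function: the largest cardinality of a subset of
indices whose sum of values is at most `s`. -/
noncomputable def knapMax {n : ℕ} (x : Fin n → ℝ) (s : ℝ) : ℕ :=
  (Finset.univ.powerset.filter (fun A => ∑ i ∈ A, x i ≤ s)).sup Finset.card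

lemma card_mul_le_sum_posPart_add {ι : Type*} [Fintype ι] (x : ι → ℝ) {s : ℝ}
    {A : Finset ι} (hA : ∑ i ∈ A, x i ≤ s) (t : ℝ) :
    (A.card : ℝ) * t ≤ ∑ i, (t - x i)⁺ + s :=
  calc (A.card : ℝ) * t = ∑ i ∈ A, (t - x i) + ∑ i ∈ A, x i := by
        rw [Finset.sum_sub_distrib, Finset.sum_const, nsmul_eq_mul]; ring
    _ ≤ ∑ i ∈ A, (t - x i)⁺ + s := add_le_add (Finset.sum_le_sum fun i _ => le_posPart _) hA
    _ ≤ ∑ i, (t - x i)⁺ + s := add_le_add_left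
        (Finset.sum_le_sum_of_subset_of_nonneg (Finset.subset_univ A)
          fun i _ _ => posPart_nonneg (t - x i)) s

lemma knapMax_mul_le_sum_posPart_add {n : ℕ} (x : Fin n → ℝ) {s : ℝ} (hs : 0 ≤ s) (t : ℝ) :
    (knapMax x s : ℝ) * t ≤ ∑ i, (t - x i)⁺ + s := by
  have hne : (Finset.univ.powerset.filter fun A : Finset (Fin n) => ∑ i ∈ A, x i ≤ s).Nonempty :=
    ⟨∅, by simp [hs]⟩
  obtain ⟨A, hA, hcard⟩ := Finset.exists_mem_eq_sup _ hne Finset.card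
  rw [knapMax, hcard]
  exact card_mul_le_sum_posPart_add x (Finset.mem_filter.1 hA).2 t

lemma integral_knapMax_mul_le {Ω : Type*} [MeasurableSpace Ω] {μ : Measure Ω}
    [IsProbabilityMeasure μ] {n : ℕ} {X : Fin n → Ω → ℝ} (hX : ∀ i, Measurable (X i))
    (hpos : ∀ i ω, 0 ≤ X i ω) {s t : ℝ} (hs : 0 ≤ s) (ht : 0 ≤ t) :
    (∫ ω, (knapMax (fun i => X i ω) s : ℝ) ∂μ) * t ≤ ∑ i, ∫ ω, (t - X i ω)⁺ ∂μ + s := by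
  have hint : ∀ i, Integrable (fun ω => (t - X i ω)⁺) μ := fun i =>
    Integrable.of_bound ((measurable_const.sub (hX i)).posPart).aestronglyMeasurable t
      (ae_of_all _ fun ω => by
        rw [Real.norm_of_nonneg (posPart_nonneg _), posPart_def]
        exact max_le (by linarith [hpos i ω]) ht)
  rw [← integral_mul_const]
  calc ∫ ω, (knapMax (fun i => X i ω) s : ℝ) * t ∂μ
      ≤ ∫ ω, (∑ i, (t - X i ω)⁺ + s) ∂μ :=
        integral_mono_of_nonneg (ae_of_all _ fun ω => by positivity)
          ((integrable_finsetSum _ fun i _ => hint i).add (integrable_const s))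
          (ae_of_all _ fun ω => knapMax_mul_le_sum_posPart_add _ hs t)
    _ = ∑ i, ∫ ω, (t - X i ω)⁺ ∂μ + s := by
        rw [integral_add (integrable_finsetSum _ fun i _ => hint i) (integrable_const s),
          integral_finsetSum _ fun i _ => hint i, integral_const, probReal_univ, one_smul]

lemma integral_posPart_sub_eq {ν : Measure ℝ} [IsFiniteMeasure ν] (hν : ∀ᵐ x ∂ν, 0 ≤ x)
    (t : ℝ) :
    ∫ x, (t - x)⁺ ∂ν = t * ν.real (Iic t) - ∫ x in Ioc 0 t, x ∂ν := by
  have hsplit : (fun x => (t - x)⁺) =ᵐ[ν]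
      fun x => t * (Iic t).indicator 1 x - (Ioc 0 t).indicator id x := by
    filter_upwards [hν] with x hx
    by_cases hxt : x ≤ t
    · rw [posPart_eq_self.2 (by linarith), indicator_of_mem (show x ∈ Iic t from hxt)]
      rcases hx.eq_or_lt with rfl | hx
      · simp
      · simp [indicator_of_mem (show x ∈ Ioc 0 t from ⟨hx, hxt⟩)]
    · rw [posPart_eq_zero.2 (by linarith), indicator_of_notMem (show x ∉ Iic t from hxt),
        indicator_of_notMem fun h => hxt h.2]
      simp
  have hid : Integrable ((Ioc 0 t).indicator id) ν :=
    (continuous_id.integrableOn_Icc.mono_set Ioc_subset_Icc_self).integrable_indicator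
      measurableSet_Ioc
  have hone : Integrable (fun x => t * (Iic t).indicator 1 x) ν :=
    ((integrable_const 1).indicator measurableSet_Iic).const_mul t
  rw [integral_congr_ae hsplit, integral_sub hone hid,
    integral_const_mul, integral_indicator_one measurableSet_Iic,
    integral_indicator measurableSet_Ioc]
  rfl

theorem bruss_robertson_general {Ω : Type*} [MeasurableSpace Ω] (μ : Measure Ω)
    [IsProbabilityMeasure μ] (n : ℕ) (X : Fin n → Ω → ℝ)
    (hX : ∀ i, Measurable (X i)) (hpos : ∀ i ω, 0 ≤ X i ω)
    (ν : Measure ℝ) [IsProbabilityMeasure ν]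
    (hlaw : ∀ i, μ.map (X i) = ν)
    (s t : ℝ) (hs : 0 < s) (ht : 0 < t)
    (hts : (n : ℝ) * ∫ x in Ioc (0:ℝ) t, x ∂ν = s) :
    ∫ ω, (knapMax (fun i => X i ω) s : ℝ) ∂μ ≤ (n : ℝ) * cdf ν t := by
  rcases n.eq_zero_or_pos with rfl | hn
  · simp only [Nat.cast_zero, zero_mul] at hts
    linarith
  have hν : ∀ᵐ x ∂ν, 0 ≤ x := hlaw ⟨0, hn⟩ ▸
    (ae_map_iff (hX _).aemeasurable measurableSet_Ici).2 (ae_of_all _ (hpos _))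
  have hmarginal : ∀ i, ∫ ω, (t - X i ω)⁺ ∂μ = ∫ x, (t - x)⁺ ∂ν := fun i => by
    rw [← hlaw i, integral_map (hX i).aemeasurable (f := fun x => (t - x)⁺)
      (continuous_posPart.comp (continuous_const.sub continuous_id)).aestronglyMeasurable]
  have key := integral_knapMax_mul_le (μ := μ) hX hpos hs.le ht.le
  simp only [hmarginal, Finset.sum_const, Finset.card_univ, Fintype.card_fin, nsmul_eq_mul,
    integral_posPart_sub_eq hν t] at key
  rw [cdf_eq_real]
  refine le_of_mul_le_mul_right ?_ ht
  linarith

/-- Bruss-Robertson inequality (common continuous marginal distribution, no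
independence required). -/
theorem bruss_robertson {Ω : Type*} [MeasurableSpace Ω] (μ : Measure Ω)
    [IsProbabilityMeasure μ] (n : ℕ) (X : Fin n → Ω → ℝ)
    (hX : ∀ i, Measurable (X i)) (hpos : ∀ i ω, 0 ≤ X i ω)
    (ν : Measure ℝ) [IsProbabilityMeasure ν]
    (hlaw : ∀ i, μ.map (X i) = ν)
    (hcont : Continuous (cdf ν))
    (s t : ℝ) (hs : 0 < s) (ht : 0 < t)
    (hts : (n : ℝ) * ∫ x in Ioc (0:ℝ) t, x ∂ν = s) :
    ∫ ω, (knapMax (fun i => X i ω) s : ℝ) ∂μ ≤ (n : ℝ) * cdf ν t :=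
  bruss_robertson_general μ n X hX hpos ν hlaw s t hs ht hts
end

section
/- If for each i ∈ [n] the nonnegative random variable X_i has continuous distribution function F_i, and t(n,s) satisfies s = ∑_{i=1}^n ∫_0^{t(n,s)} x dF_i(x), then E[max{|A| : A ⊆ [n], ∑_{i∈A} X_i ≤ s}] ≤ ∑_{i=1}^n F_i(t(n,s)). -/
open MeasureTheory ProbabilityTheory Set

/-! Fix `t > 0` and a set `A` with `∑ i ∈ A, x i ≤ s`. Each element of `A` with `x i > t` costs more
than `t`, and each `i ∉ A` with `x i ≤ t` would cost at most `t`, so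
`t * #A ≤ t * #{i | x i ≤ t} + s - ∑ i with x i ≤ t, x i`. In expectation the first count becomes
`t * ∑ i, F_i t` and the sum becomes `∑ i, ∫_0^t x dF_i = s`, which cancels `s`. -/

open Finset

lemma card_le_of_sum_le {ι : Type*} [Fintype ι] {x : ι → ℝ} {A : Finset ι} {s t : ℝ}
    (hx : ∀ i, 0 ≤ x i) (hA : ∑ i ∈ A, x i ≤ s) (ht : 0 < t) :
    (#A : ℝ) ≤ ∑ i, (Iic t).indicator 1 (x i) + (s - ∑ i, (Ioc 0 t).indicator id (x i)) / t := by
  classical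
  have hterm : ∀ i, t * (if i ∈ A then 1 else 0)
      + ((Ioc 0 t).indicator id (x i) - t * (Iic t).indicator 1 (x i)) ≤ if i ∈ A then x i else 0 := by
    intro i
    have := hx i
    by_cases hi : i ∈ A <;> by_cases hxt : x i ≤ t <;> by_cases h0 : 0 < x i <;>
      simp [hi, hxt, h0, indicator] <;> linarith
  have hsum := sum_le_sum fun i (_ : i ∈ Finset.univ) => hterm i
  rw [sum_add_distrib, ← mul_sum, sum_boole, Finset.filter_mem_eq_inter, sum_ite_mem,
    Finset.univ_inter, sum_sub_distrib, ← mul_sum] at hsum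
  rw [← sub_le_iff_le_add', le_div_iff₀ ht]
  linarith

lemma knapMax_le {n : ℕ} {x : Fin n → ℝ} {s t : ℝ} (hx : ∀ i, 0 ≤ x i) (hs : 0 ≤ s) (ht : 0 < t) :
    (knapMax x s : ℝ) ≤
      ∑ i, (Iic t).indicator 1 (x i) + (s - ∑ i, (Ioc 0 t).indicator id (x i)) / t := by
  have hne : (Finset.univ.powerset.filter fun A : Finset (Fin n) => ∑ i ∈ A, x i ≤ s).Nonempty :=
    ⟨∅, by simpa using hs⟩
  obtain ⟨A, hA, hmax⟩ := exists_mem_eq_sup _ hne card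
  rw [knapMax, hmax]
  exact card_le_of_sum_le hx (mem_filter.1 hA).2 ht

section Expectation

variable {Ω : Type*} [MeasurableSpace Ω] {μ : Measure Ω}

lemma integral_le_sum_integral_add_div [IsProbabilityMeasure μ] {ι : Type*} [Fintype ι]
    {Y : Ω → ℝ} {f g : ι → Ω → ℝ} {s t : ℝ} (hY : 0 ≤ Y) (hf : ∀ i, Integrable (f i) μ)
    (hg : ∀ i, Integrable (g i) μ) (hle : ∀ ω, Y ω ≤ ∑ i, f i ω + (s - ∑ i, g i ω) / t) :
    ∫ ω, Y ω ∂μ ≤ ∑ i, ∫ ω, f i ω ∂μ + (s - ∑ i, ∫ ω, g i ω ∂μ) / t := by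
  have hF : Integrable (fun ω => ∑ i, f i ω) μ := integrable_finsetSum _ fun i _ => hf i
  have hG : Integrable (fun ω => s - ∑ i, g i ω) μ :=
    (integrable_const s).sub (integrable_finsetSum _ fun i _ => hg i)
  calc ∫ ω, Y ω ∂μ ≤ ∫ ω, (∑ i, f i ω + (s - ∑ i, g i ω) / t) ∂μ :=
        integral_mono_of_nonneg (.of_forall hY) (hF.add (hG.div_const t)) (.of_forall hle)
    _ = _ := by
        rw [integral_add hF (hG.div_const t), integral_div,
          integral_sub (integrable_const s) (integrable_finsetSum _ fun i _ => hg i),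
          integral_finsetSum _ fun i _ => hf i, integral_finsetSum _ fun i _ => hg i,
          integral_const, probReal_univ, one_smul]

variable {X : Ω → ℝ}

lemma integrable_indicator_comp {s : Set ℝ} {f : ℝ → ℝ} (hX : Measurable X) (hs : MeasurableSet s)
    (hf : IntegrableOn f s (μ.map X)) : Integrable (fun ω => s.indicator f (X ω)) μ :=
  ((integrable_indicator_iff hs).2 hf).comp_measurable hX

lemma integral_indicator_comp {s : Set ℝ} {f : ℝ → ℝ} (hX : Measurable X) (hs : MeasurableSet s)
    (hf : Measurable f) : ∫ ω, s.indicator f (X ω) ∂μ = ∫ x in s, f x ∂(μ.map X) := by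
  rw [← integral_indicator hs, integral_map hX.aemeasurable (hf.indicator hs).aestronglyMeasurable]

lemma integral_indicator_Iic_one_comp [IsProbabilityMeasure μ] (hX : Measurable X) (t : ℝ) :
    ∫ ω, (Iic t).indicator 1 (X ω) ∂μ = cdf (μ.map X) t := by
  have := Measure.isProbabilityMeasure_map (μ := μ) hX.aemeasurable
  rw [cdf_eq_real, map_measureReal_apply hX measurableSet_Iic,
    ← integral_indicator_one (hX measurableSet_Iic)]
  rfl

end Expectation

theorem extended_bruss_robertson_general {Ω : Type*} [MeasurableSpace Ω] (μ : Measure Ω)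
    [IsProbabilityMeasure μ] (n : ℕ) (X : Fin n → Ω → ℝ)
    (hX : ∀ i, Measurable (X i)) (hpos : ∀ i ω, 0 ≤ X i ω)
    (ν : Fin n → Measure ℝ)
    (hlaw : ∀ i, μ.map (X i) = ν i)
    (s t : ℝ) (ht : 0 < t)
    (hts : s = ∑ i : Fin n, ∫ x in Ioc (0:ℝ) t, x ∂(ν i)) :
    ∫ ω, (knapMax (fun i => X i ω) s : ℝ) ∂μ ≤ ∑ i : Fin n, cdf (ν i) t := by
  obtain rfl : ν = fun i => μ.map (X i) := funext fun i => (hlaw i).symm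
  have hs : 0 ≤ s :=
    hts ▸ sum_nonneg fun i _ => setIntegral_nonneg measurableSet_Ioc fun x hx => hx.1.le
  have hbound := integral_le_sum_integral_add_div (μ := μ)
    (f := fun i ω => (Iic t).indicator 1 (X i ω)) (g := fun i ω => (Ioc 0 t).indicator id (X i ω))
    (fun ω => Nat.cast_nonneg _)
    (fun i => integrable_indicator_comp (hX i) measurableSet_Iic integrableOn_const)
    (fun i => integrable_indicator_comp (hX i) measurableSet_Ioc continuous_id.integrableOn_Ioc)
    (fun ω => knapMax_le (hpos · ω) hs ht)
  simpa only [integral_indicator_Iic_one_comp (hX _),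
    integral_indicator_comp (hX _) measurableSet_Ioc measurable_id, id, ← hts, sub_self,
    zero_div, add_zero] using hbound

/-- Extended Bruss-Robertson inequality: neither independence nor identical
distributions are required. -/
theorem extended_bruss_robertson {Ω : Type*} [MeasurableSpace Ω] (μ : Measure Ω)
    [IsProbabilityMeasure μ] (n : ℕ) (X : Fin n → Ω → ℝ)
    (hX : ∀ i, Measurable (X i)) (hpos : ∀ i ω, 0 ≤ X i ω)
    (ν : Fin n → Measure ℝ) (hprob : ∀ i, IsProbabilityMeasure (ν i))
    (hlaw : ∀ i, μ.map (X i) = ν i)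
    (hcont : ∀ i, Continuous (cdf (ν i)))
    (s t : ℝ) (hs : 0 < s) (ht : 0 < t)
    (hts : s = ∑ i : Fin n, ∫ x in Ioc (0:ℝ) t, x ∂(ν i)) :
    ∫ ω, (knapMax (fun i => X i ω) s : ℝ) ∂μ ≤ ∑ i : Fin n, cdf (ν i) t :=
  extended_bruss_robertson_general μ n X hX hpos ν hlaw s t ht hts
end

section
/- If X_1, ..., X_n are random variables each uniformly distributed on [0,1] (no independence assumed), then E[max{|A| : A ⊆ [n], ∑_{i∈A} X_i ≤ 1}] ≤ √(2n). -/
/-!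
If `A` is a largest set with `∑ i ∈ A, X i ≤ 1`, then for every `c`,
`c * |A| ≤ ∑ i ∈ A, (X i + (c - X i)⁺) ≤ 1 + ∑ i, (c - X i)⁺`.
The expectation of the right-hand side depends only on the marginals, so `m = 𝔼 |A|`
satisfies `c * m ≤ 1 + n c² / 2` for all `c ∈ [0, 1]`; taking `c = m / n` gives `m² ≤ 2 n`.
-/

open MeasureTheory Set

namespace knapMax

variable {n : ℕ}

lemma le_card (x : Fin n → ℝ) (s : ℝ) : knapMax x s ≤ n :=
  Finset.sup_le fun A _ => by simpa using Finset.card_le_univ A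

lemma exists_card_eq {x : Fin n → ℝ} {s : ℝ} (hs : 0 ≤ s) :
    ∃ A : Finset (Fin n), A.card = knapMax x s ∧ ∑ i ∈ A, x i ≤ s := by
  obtain ⟨A, hA, hmax⟩ := Finset.exists_mem_eq_sup
    (Finset.univ.powerset.filter fun A => ∑ i ∈ A, x i ≤ s) ⟨∅, by simpa using hs⟩ Finset.card
  exact ⟨A, hmax.symm, (Finset.mem_filter.1 hA).2⟩

lemma eq_sup' (x : Fin n → ℝ) (s : ℝ) :
    knapMax x s = Finset.univ.sup' Finset.univ_nonempty
      (fun A : Finset (Fin n) => if ∑ i ∈ A, x i ≤ s then A.card else 0) := by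
  rw [Finset.sup'_eq_sup, Finset.sup_ite, knapMax, Finset.powerset_univ]
  simp

lemma measurable (s : ℝ) : Measurable (fun x : Fin n → ℝ => knapMax x s) := by
  have hA : ∀ A : Finset (Fin n),
      Measurable fun x : Fin n → ℝ => if ∑ i ∈ A, x i ≤ s then A.card else 0 := fun A =>
    Measurable.ite (measurableSet_le (Finset.measurable_sum A fun i _ => measurable_pi_apply i)
      measurable_const) measurable_const measurable_const
  convert Finset.measurable_sup' Finset.univ_nonempty fun A _ => hA A using 1
  ext x
  simp [eq_sup', Finset.sup'_apply]

lemma mul_le_add_sum_max_sub (x : Fin n → ℝ) {s : ℝ} (hs : 0 ≤ s) (c : ℝ) :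
    c * knapMax x s ≤ s + ∑ i, max (c - x i) 0 := by
  obtain ⟨A, hcard, hsum⟩ := exists_card_eq (x := x) hs
  calc c * knapMax x s = ∑ i ∈ A, c := by simp [← hcard, mul_comm]
    _ ≤ ∑ i ∈ A, (x i + max (c - x i) 0) :=
        Finset.sum_le_sum fun i _ => by linarith [le_max_left (c - x i) 0]
    _ = ∑ i ∈ A, x i + ∑ i ∈ A, max (c - x i) 0 := Finset.sum_add_distrib
    _ ≤ s + ∑ i, max (c - x i) 0 := add_le_add hsum
        (Finset.sum_le_sum_of_subset_of_nonneg A.subset_univ fun i _ _ => le_max_right _ _)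

end knapMax

lemma integral_Icc_zero_one_max_sub {c : ℝ} (hc : c ∈ Icc (0 : ℝ) 1) :
    ∫ x in Icc (0 : ℝ) 1, max (c - x) 0 = c ^ 2 / 2 := by
  have hind : EqOn (fun x => max (c - x) 0) ((Iic c).indicator (fun x => c - x)) (Icc 0 1) := by
    intro x _
    by_cases hx : x ≤ c
    · simp [indicator, hx]
    · simp [indicator, hx, (not_le.1 hx).le]
  rw [setIntegral_congr_fun measurableSet_Icc hind, setIntegral_indicator measurableSet_Iic,
    show Icc 0 1 ∩ Iic c = Icc 0 c from by ext; simp; grind, integral_Icc_eq_integral_Ioc,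
    ← intervalIntegral.integral_of_le hc.1, intervalIntegral.integral_comp_sub_left (fun x => x),
    integral_id]
  ring

section UniformLaw

variable {Ω : Type*} [MeasurableSpace Ω] {μ : Measure Ω} {Y : Ω → ℝ}

lemma integrable_max_sub_of_map_eq (hY : Measurable Y)
    (hlaw : μ.map Y = volume.restrict (Icc (0 : ℝ) 1)) (c : ℝ) :
    Integrable (fun ω => max (c - Y ω) 0) μ := by
  have hg : Integrable (fun x => max (c - x) 0) (μ.map Y) := by
    rw [hlaw]
    exact (by fun_prop : Continuous fun x : ℝ => max (c - x) 0).integrableOn_Icc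
  exact hg.comp_measurable hY

lemma integral_max_sub_of_map_eq (hY : Measurable Y)
    (hlaw : μ.map Y = volume.restrict (Icc (0 : ℝ) 1)) {c : ℝ} (hc : c ∈ Icc (0 : ℝ) 1) :
    ∫ ω, max (c - Y ω) 0 ∂μ = c ^ 2 / 2 := by
  have hg : Continuous fun x : ℝ => max (c - x) 0 := by fun_prop
  rw [← integral_map hY.aemeasurable hg.aestronglyMeasurable, hlaw,
    integral_Icc_zero_one_max_sub hc]

end UniformLaw

lemma le_sqrt_two_mul_of_forall_mul_le {m N : ℝ} (hm : 0 ≤ m) (hmN : m ≤ N)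
    (h : ∀ c ∈ Icc (0 : ℝ) 1, c * m ≤ 1 + N * (c ^ 2 / 2)) : m ≤ √(2 * N) := by
  apply Real.le_sqrt_of_sq_le
  rcases (hm.trans hmN).eq_or_lt with hN | hN
  · nlinarith
  have := h (m / N) ⟨div_nonneg hm hN.le, (div_le_one hN).2 hmN⟩
  field_simp at this
  nlinarith

/-- For (possibly dependent) random variables each uniform on `[0,1]`,
the expected Bruss-Robertson maximal function at `s = 1` is at most `√(2n)`. -/
theorem bruss_robertson_uniform {Ω : Type*} [MeasurableSpace Ω] (μ : Measure Ω)
    [IsProbabilityMeasure μ] (n : ℕ) (X : Fin n → Ω → ℝ)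
    (hX : ∀ i, Measurable (X i))
    (hlaw : ∀ i, μ.map (X i) = volume.restrict (Icc (0:ℝ) 1)) :
    ∫ ω, (knapMax (fun i => X i ω) 1 : ℝ) ∂μ ≤ Real.sqrt (2 * n) := by
  have hbound : ∀ ω, (knapMax (fun i => X i ω) 1 : ℝ) ≤ n := fun ω => by
    exact_mod_cast knapMax.le_card _ _
  have hint : Integrable (fun ω => (knapMax (fun i => X i ω) 1 : ℝ)) μ :=
    .of_bound (measurable_from_top.comp ((knapMax.measurable 1).comp
      (measurable_pi_lambda _ hX))).aestronglyMeasurable n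
      (ae_of_all _ fun ω => by simpa using hbound ω)
  refine le_sqrt_two_mul_of_forall_mul_le (integral_nonneg fun ω => by positivity)
    ((integral_mono hint (integrable_const _) hbound).trans (by simp)) fun c hc => ?_
  have hsum : ∀ i ∈ Finset.univ, Integrable (fun ω => max (c - X i ω) 0) μ :=
    fun i _ => integrable_max_sub_of_map_eq (hX i) (hlaw i) c
  calc c * ∫ ω, (knapMax (fun i => X i ω) 1 : ℝ) ∂μ
      = ∫ ω, c * knapMax (fun i => X i ω) 1 ∂μ := (integral_const_mul c _).symm
    _ ≤ ∫ ω, (1 + ∑ i, max (c - X i ω) 0) ∂μ :=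
        integral_mono (hint.const_mul c) ((integrable_const 1).add (integrable_finsetSum _ hsum))
          fun ω => knapMax.mul_le_add_sum_max_sub _ zero_le_one c
    _ = 1 + n * (c ^ 2 / 2) := by
        rw [integral_add (integrable_const 1) (integrable_finsetSum _ hsum),
          integral_finsetSum _ hsum]
        simp [integral_max_sub_of_map_eq (hX _) (hlaw _) hc]
end

section
/- If for each i ∈ [n], X_i is uniformly distributed on [0, i] (no independence assumed) and n ≥ 4, then E[max{|A| : A ⊆ [n], ∑_{i∈A} X_i ≤ 1}] ≤ √(2 H_n), where H_n = ∑_{i=1}^n 1/i is the n-th harmonic number. -/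
open MeasureTheory Set
open scoped ENNReal

lemma exists_sum_le_card_eq_knapMax {n : ℕ} (x : Fin n → ℝ) {s : ℝ} (hs : 0 ≤ s) :
    ∃ A : Finset (Fin n), ∑ i ∈ A, x i ≤ s ∧ A.card = knapMax x s := by
  obtain ⟨A, hA, hsup⟩ := Finset.exists_mem_eq_sup
    (Finset.univ.powerset.filter (fun A => ∑ i ∈ A, x i ≤ s)) ⟨∅, by simpa using hs⟩ Finset.card
  exact ⟨A, (Finset.mem_filter.mp hA).2, hsup.symm⟩

lemma card_mul_le_of_sum_le {ι : Type*} [Fintype ι] [DecidableEq ι] (x : ι → ℝ) (τ s : ℝ)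
    {A : Finset ι} (hA : ∑ i ∈ A, x i ≤ s) : A.card * τ ≤ s + ∑ i, max (τ - x i) 0 := by
  have hterm : ∀ i, (if i ∈ A then τ else 0) ≤ max (τ - x i) 0 + if i ∈ A then x i else 0 := by
    intro i
    split_ifs <;> linarith [le_max_left (τ - x i) 0, le_max_right (τ - x i) 0]
  calc (A.card : ℝ) * τ = ∑ i, if i ∈ A then τ else 0 := by
        rw [Finset.sum_ite_mem, Finset.univ_inter, Finset.sum_const, nsmul_eq_mul]
    _ ≤ ∑ i, (max (τ - x i) 0 + if i ∈ A then x i else 0) :=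
        Finset.sum_le_sum fun i _ => hterm i
    _ = ∑ i ∈ A, x i + ∑ i, max (τ - x i) 0 := by
        rw [Finset.sum_add_distrib, add_comm, Finset.sum_ite_mem, Finset.univ_inter]
    _ ≤ s + ∑ i, max (τ - x i) 0 := by gcongr

lemma knapMax_mul_le {n : ℕ} (x : Fin n → ℝ) {s : ℝ} (hs : 0 ≤ s) (τ : ℝ) :
    knapMax x s * τ ≤ s + ∑ i, max (τ - x i) 0 := by
  obtain ⟨A, hA, hcard⟩ := exists_sum_le_card_eq_knapMax x hs
  exact hcard ▸ card_mul_le_of_sum_le x τ s hA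

lemma setIntegral_Icc_max_sub {a τ : ℝ} (hτ : 0 ≤ τ) (hτa : τ ≤ a) :
    ∫ t in Icc 0 a, max (τ - t) 0 = τ ^ 2 / 2 := by
  rw [integral_Icc_eq_integral_Ioc, ← intervalIntegral.integral_of_le (hτ.trans hτa),
    ← intervalIntegral.integral_add_adjacent_intervals (b := τ)
      (by apply Continuous.intervalIntegrable; fun_prop)
      (by apply Continuous.intervalIntegrable; fun_prop)]
  have hleft : ∫ t in 0..τ, max (τ - t) 0 = ∫ t in 0..τ, (τ - t) :=
    intervalIntegral.integral_congr fun t ht => by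
      rw [uIcc_of_le hτ] at ht
      exact max_eq_left (sub_nonneg.mpr ht.2)
  have hright : ∫ t in τ..a, max (τ - t) 0 = ∫ _ in τ..a, (0 : ℝ) :=
    intervalIntegral.integral_congr fun t ht => by
      rw [uIcc_of_le hτa] at ht
      exact max_eq_right (sub_nonpos.mpr ht.1)
  rw [hleft, hright,
    intervalIntegral.integral_sub intervalIntegrable_const intervalIntegral.intervalIntegrable_id]
  rw [intervalIntegral.integral_const, integral_id, intervalIntegral.integral_zero, smul_eq_mul]
  ring

lemma integrable_and_integral_comp_of_map_eq_uniform {Ω : Type*} [MeasurableSpace Ω]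
    {μ : Measure Ω} {Y : Ω → ℝ} (hY : Measurable Y) {a : ℝ} (ha : 0 < a)
    (hlaw : μ.map Y = (ENNReal.ofReal a)⁻¹ • volume.restrict (Icc 0 a))
    {g : ℝ → ℝ} (hg : Continuous g) :
    Integrable (fun ω => g (Y ω)) μ ∧ ∫ ω, g (Y ω) ∂μ = a⁻¹ * ∫ t in Icc 0 a, g t := by
  have hgint : Integrable g (μ.map Y) := by
    rw [hlaw]
    exact hg.integrableOn_Icc.smul_measure (by simpa using ha)
  refine ⟨(integrable_map_measure hg.aestronglyMeasurable hY.aemeasurable).mp hgint, ?_⟩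
  rw [← integral_map hY.aemeasurable hg.aestronglyMeasurable, hlaw, integral_smul_measure,
    ENNReal.toReal_inv, ENNReal.toReal_ofReal ha.le, smul_eq_mul]

lemma mul_integral_knapMax_le {Ω : Type*} [MeasurableSpace Ω] (μ : Measure Ω)
    [IsProbabilityMeasure μ] {n : ℕ} (X : Fin n → Ω → ℝ) (hX : ∀ i, Measurable (X i))
    (hlaw : ∀ i : Fin n, μ.map (X i)
      = ((i.1 + 1 : ℝ≥0∞))⁻¹ • volume.restrict (Icc (0:ℝ) (i.1 + 1)))
    {s τ : ℝ} (hs : 0 ≤ s) (hτ : 0 ≤ τ) (hτ1 : τ ≤ 1) :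
    τ * ∫ ω, (knapMax (fun i => X i ω) s : ℝ) ∂μ
      ≤ s + τ ^ 2 / 2 * ∑ i ∈ Finset.range n, (1 : ℝ) / (i + 1) := by
  have hslack : ∀ i : Fin n, Integrable (fun ω => max (τ - X i ω) 0) μ ∧
      ∫ ω, max (τ - X i ω) 0 ∂μ = τ ^ 2 / 2 * (1 / (i.1 + 1)) := by
    intro i
    have hlaw' : μ.map (X i)
        = (ENNReal.ofReal (i.1 + 1))⁻¹ • volume.restrict (Icc (0 : ℝ) (i.1 + 1)) := by
      rw [hlaw i, ENNReal.ofReal_add (Nat.cast_nonneg _) zero_le_one, ENNReal.ofReal_natCast,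
        ENNReal.ofReal_one]
    obtain ⟨hint, heq⟩ := integrable_and_integral_comp_of_map_eq_uniform (hX i)
      (Nat.cast_add_one_pos i.1) hlaw' (g := fun t => max (τ - t) 0) (by fun_prop)
    refine ⟨hint, ?_⟩
    rw [heq, setIntegral_Icc_max_sub hτ (hτ1.trans (by simp))]
    ring
  calc τ * ∫ ω, (knapMax (fun i => X i ω) s : ℝ) ∂μ
      = ∫ ω, (knapMax (fun i => X i ω) s : ℝ) * τ ∂μ := by rw [integral_mul_const, mul_comm]
    _ ≤ ∫ ω, (s + ∑ i, max (τ - X i ω) 0) ∂μ :=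
        integral_mono_of_nonneg (ae_of_all _ fun ω => by positivity)
          ((integrable_const s).add (integrable_finsetSum _ fun i _ => (hslack i).1))
          (ae_of_all _ fun ω => knapMax_mul_le (fun i => X i ω) hs τ)
    _ = s + τ ^ 2 / 2 * ∑ i ∈ Finset.range n, (1 : ℝ) / (i + 1) := by
        rw [integral_add (integrable_const s) (integrable_finsetSum _ fun i _ => (hslack i).1),
          integral_finsetSum _ fun i _ => (hslack i).1, Finset.mul_sum,
          ← Fin.sum_univ_eq_sum_range (fun i => τ ^ 2 / 2 * (1 / ((i : ℝ) + 1)))]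
        simp only [(hslack _).2, integral_const, probReal_univ, one_smul]

lemma two_le_sum_range_one_div_add_one {n : ℕ} (hn : 4 ≤ n) :
    2 ≤ ∑ i ∈ Finset.range n, (1 : ℝ) / (i + 1) :=
  calc (2 : ℝ) ≤ ∑ i ∈ Finset.range 4, (1 : ℝ) / (i + 1) := by norm_num [Finset.sum_range_succ]
    _ ≤ ∑ i ∈ Finset.range n, (1 : ℝ) / (i + 1) :=
        Finset.sum_le_sum_of_subset_of_nonneg (Finset.range_subset_range.mpr hn)
          fun i _ _ => by positivity

/-- If `X i` is uniformly distributed on `[0, i]` for `i = 1, …, n` (no independence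
assumed) and `n ≥ 4`, then the expected maximal number of values summing to at most `1`
is bounded by `√(2 Hₙ)`, where `Hₙ` is the `n`-th harmonic number. -/
theorem bruss_robertson_multiscale {Ω : Type*} [MeasurableSpace Ω] (μ : Measure Ω)
    [IsProbabilityMeasure μ] (n : ℕ) (hn : 4 ≤ n) (X : Fin n → Ω → ℝ)
    (hX : ∀ i, Measurable (X i))
    (hlaw : ∀ i : Fin n, μ.map (X i)
      = ((i.1 + 1 : ℝ≥0∞))⁻¹ • volume.restrict (Icc (0:ℝ) (i.1 + 1))) :
    ∫ ω, (knapMax (fun i => X i ω) 1 : ℝ) ∂μ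
      ≤ Real.sqrt (2 * ∑ i ∈ Finset.range n, (1 : ℝ) / (i + 1)) := by
  set H := ∑ i ∈ Finset.range n, (1 : ℝ) / (i + 1)
  have hH : 2 ≤ H := two_le_sum_range_one_div_add_one hn
  set τ := Real.sqrt (2 / H)
  have hτ : 0 < τ := Real.sqrt_pos.mpr (by positivity)
  have hτ1 : τ ≤ 1 := Real.sqrt_le_one.mpr ((div_le_one (by positivity)).mpr hH)
  have hτsq : τ ^ 2 / 2 * H = 1 := by
    rw [Real.sq_sqrt (by positivity)]
    field_simp
  have hτmul : τ * Real.sqrt (2 * H) = 2 := by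
    rw [← Real.sqrt_mul (by positivity), show 2 / H * (2 * H) = 2 ^ 2 by field_simp,
      Real.sqrt_sq zero_le_two]
  refine le_of_mul_le_mul_left ?_ hτ
  calc τ * ∫ ω, (knapMax (fun i => X i ω) 1 : ℝ) ∂μ ≤ 1 + τ ^ 2 / 2 * H :=
        mul_integral_knapMax_le μ X hX hlaw zero_le_one hτ.le hτ1
    _ = τ * Real.sqrt (2 * H) := by rw [hτsq, hτmul]; norm_num
end

section
/- For X uniformly distributed on [0,1] and n ≥ 1, ∫_0^1 (min(n, 1/x) − min(n, ⌊1/x⌋)) dx = 1 − γ + O(1/n); i.e., the integral differs from 1 − γ by at most C/n for an absolute constant C. -/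
open Set MeasureTheory Real intervalIntegral

/-! On `(1/n, 1]` the integrand is the fractional part of `1/x`, which equals `1/x - k` on
`(1/(k+1), 1/k]`; summing these pieces gives `∫_{1/n}^1 {1/x} dx = log n + 1 - H_n`.
On `(0, 1/n]` the integrand lies in `[0, 1]`, so it contributes at most `1/n`, and
`H_n - log n = γ + O(1/n)`. -/

lemma intervalIntegrable_of_abs_le {f : ℝ → ℝ} {C : ℝ} (hf : Measurable f)
    (hC : ∀ x, |f x| ≤ C) (a b : ℝ) : IntervalIntegrable f volume a b :=
  (intervalIntegrable_const (c := C)).mono_fun' hf.aestronglyMeasurable (ae_of_all _ hC)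

lemma abs_min_sub_min_floor_le_one (c y : ℝ) : |min c y - min c (⌊y⌋ : ℝ)| ≤ 1 :=
  calc |min c y - min c (⌊y⌋ : ℝ)| ≤ max |c - c| |y - ⌊y⌋| := abs_min_sub_min_le_max ..
    _ ≤ 1 := by
      rw [sub_self, abs_zero, Int.self_sub_floor, Int.abs_fract]
      exact max_le zero_le_one (Int.fract_lt_one y).le

lemma min_sub_min_floor_of_le {c y : ℝ} (h : y ≤ c) :
    min c y - min c (⌊y⌋ : ℝ) = Int.fract y := by
  rw [min_eq_right h, min_eq_right ((Int.floor_le y).trans h), Int.self_sub_floor]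

lemma floor_one_div_eq_of_mem_Ioc {k : ℕ} {x : ℝ} (hx : x ∈ Ioc (1 / (k + 1 : ℝ)) (1 / k)) :
    ⌊1 / x⌋ = k := by
  obtain ⟨hlo, hhi⟩ := hx
  have hx0 : 0 < x := lt_trans (by positivity) hlo
  rcases Nat.eq_zero_or_pos k with rfl | hk
  · rw [Nat.cast_zero, div_zero] at hhi
    linarith
  rw [div_lt_iff₀ (by positivity)] at hlo
  rw [le_div_iff₀ (by positivity)] at hhi
  rw [Int.floor_eq_iff, le_div_iff₀ hx0, div_lt_iff₀ hx0]
  push_cast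
  constructor <;> linarith

lemma integral_fract_one_div_one_div_succ_to_one_div {k : ℕ} (hk : k ≠ 0) :
    ∫ x in (1 / (k + 1 : ℝ))..(1 / k), Int.fract (1 / x)
      = log (k + 1) - log k - 1 / (k + 1) := by
  have hk0 : (0 : ℝ) < k := by positivity
  have hle : 1 / (k + 1 : ℝ) ≤ 1 / k := one_div_le_one_div_of_le hk0 (by linarith)
  have hfract : EqOn (fun x : ℝ => Int.fract (1 / x)) (fun x => 1 / x - k)
      (Ioc (1 / (k + 1 : ℝ)) (1 / k)) := by
    intro x hx
    simp only [Int.fract, floor_one_div_eq_of_mem_Ioc hx, Int.cast_natCast]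
  have hne : ∀ x ∈ uIcc (1 / (k + 1 : ℝ)) (1 / k), x ≠ 0 := fun x hx =>
    ((by positivity : (0 : ℝ) < 1 / (k + 1)).trans_le (uIcc_of_le hle ▸ hx).1).ne'
  rw [integral_of_le hle, setIntegral_congr_fun measurableSet_Ioc hfract, ← integral_of_le hle,
    integral_sub (intervalIntegrable_one_div hne continuousOn_id) intervalIntegrable_const,
    integral_one_div_of_pos (by positivity) (by positivity), intervalIntegral.integral_const,
    smul_eq_mul, show (1 / k : ℝ) / (1 / (k + 1)) = (k + 1) / k by field_simp,
    log_div (by positivity) hk0.ne']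
  field_simp
  ring

lemma intervalIntegrable_fract_one_div (a b : ℝ) :
    IntervalIntegrable (fun x => Int.fract (1 / x)) volume a b :=
  intervalIntegrable_of_abs_le (by fun_prop)
    (fun x => Int.abs_fract.trans_le (Int.fract_lt_one _).le) a b

lemma integral_fract_one_div_one_div_to_one {n : ℕ} (hn : n ≠ 0) :
    ∫ x in (1 / (n : ℝ))..1, Int.fract (1 / x) = log n + 1 - harmonic n := by
  induction n with
  | zero => contradiction
  | succ k ih =>
    rcases eq_or_ne k 0 with rfl | hk
    · simp
    rw [← integral_add_adjacent_intervals (b := 1 / (k : ℝ))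
      (intervalIntegrable_fract_one_div ..) (intervalIntegrable_fract_one_div ..), Nat.cast_succ,
      integral_fract_one_div_one_div_succ_to_one_div hk, ih hk, harmonic_succ]
    push_cast
    ring

lemma abs_harmonic_sub_log_sub_eulerMascheroniConstant_le {n : ℕ} (hn : n ≠ 0) :
    |(harmonic n - log n : ℝ) - eulerMascheroniConstant| ≤ 1 / n := by
  have hn0 : (0 : ℝ) < n := by positivity
  have hlower : eulerMascheroniConstant < harmonic n - log n := by
    simpa [eulerMascheroniSeq', hn] using eulerMascheroniConstant_lt_eulerMascheroniSeq' n
  have hupper : harmonic n - log (n + 1) < eulerMascheroniConstant := by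
    simpa [eulerMascheroniSeq] using eulerMascheroniSeq_lt_eulerMascheroniConstant n
  have hlog : log (n + 1) - log n ≤ 1 / n :=
    calc log (n + 1) - log n = log ((n + 1) / n) := (log_div (by positivity) hn0.ne').symm
      _ ≤ (n + 1) / n - 1 := log_le_sub_one_of_pos (by positivity)
      _ = 1 / n := by field_simp; ring
  rw [abs_le]
  constructor <;> linarith

/-- `∫₀¹ (min(n, 1/x) − min(n, ⌊1/x⌋)) dx = 1 − γ + O(1/n)`: the integral differs
from `1 − γ` by at most `C/n` for an absolute constant `C` and all `n ≥ 1`. -/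
theorem integral_min_inv_sub_min_floor :
    ∃ C : ℝ, ∀ n : ℕ, 1 ≤ n →
      |(∫ x in Ioc (0:ℝ) 1, (min (n : ℝ) (1 / x) - min (n : ℝ) ((⌊1 / x⌋ : ℤ) : ℝ)))
          - (1 - Real.eulerMascheroniConstant)| ≤ C / n := by
  refine ⟨2, fun n hn => ?_⟩
  have hn0 : (0 : ℝ) < n := by positivity
  set f : ℝ → ℝ := fun x => min (n : ℝ) (1 / x) - min (n : ℝ) ((⌊1 / x⌋ : ℤ) : ℝ)
  have hf_abs : ∀ x, |f x| ≤ 1 := fun x => abs_min_sub_min_floor_le_one _ _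
  have hf_int : ∀ a b, IntervalIntegrable f volume a b :=
    intervalIntegrable_of_abs_le (by fun_prop) hf_abs
  have hhead : |∫ x in (0 : ℝ)..(1 / n), f x| ≤ 1 / n := by
    simpa [abs_of_pos hn0] using
      norm_integral_le_of_norm_le_const (a := 0) (b := 1 / n) (f := f) (fun x _ => hf_abs x)
  have htail : ∫ x in (1 / n : ℝ)..1, f x = log n + 1 - harmonic n := by
    rw [← integral_fract_one_div_one_div_to_one (by omega)]
    refine integral_congr fun x hx => min_sub_min_floor_of_le ?_
    have hx' : 1 / n ≤ x :=
      (uIcc_of_le (div_le_one_of_le₀ (Nat.one_le_cast.2 hn) hn0.le) ▸ hx).1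
    exact (one_div_le ((by positivity : (0 : ℝ) < 1 / n).trans_le hx') hn0).2 hx'
  rw [← integral_of_le zero_le_one, ← integral_add_adjacent_intervals (hf_int 0 (1 / n))
    (hf_int _ 1), htail]
  calc _ = |(∫ x in (0 : ℝ)..(1 / n), f x) -
        ((harmonic n - log n : ℝ) - eulerMascheroniConstant)| := by ring_nf
    _ ≤ 1 / n + 1 / n := (abs_sub _ _).trans
        (add_le_add hhead (abs_harmonic_sub_log_sub_eulerMascheroniConstant_le (by omega)))
    _ = 2 / n := by ring
end

section
/- If ∑_{i∈B} X_i ≤ ∑_{i∈A} X_i where A is the longest initial segment (in the sorted order ≺) of {X_1,...,X_n} with sum ≤ s and B = {i : X_i ≤ t} with ∑_{i∈B} X_i ≤ s, then B ⊆ A and ∑_{i∈B} X_i + t·(|A| − |B|) ≤ ∑_{i∈A} X_i. -/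
/-!
If some `i ∈ B` were missing from `A`, then, `A` being closed downwards in the order of values,
every element of `A` would be at most `x i ≤ t`, so `insert i A ⊆ B` would be a larger set within
the budget `s`, contradicting the maximality of `A`. Once `B ⊆ A`, the sum over `A` is the sum over
`B` plus `|A| - |B|` terms, each of which exceeds `t`.
-/

open Finset

section

variable {ι M : Type*} {x : ι → M} {A : Finset ι}

lemma le_of_mem_of_notMem_of_lowerClosed [LinearOrder M]
    (hA : ∀ i ∈ A, ∀ j, x j < x i → j ∈ A) {i j : ι} (hj : j ∈ A) (hi : i ∉ A) :
    x j ≤ x i :=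
  not_lt.1 fun h => hi (hA j hj i h)

lemma filter_le_subset_of_lowerClosed_of_card_maximal [Fintype ι] [DecidableEq ι]
    [AddCommMonoid M] [LinearOrder M] [IsOrderedAddMonoid M] {s t : M}
    (hx : ∀ i, 0 ≤ x i) (hA : ∀ i ∈ A, ∀ j, x j < x i → j ∈ A)
    (hAmax : ∀ A' : Finset ι, ∑ i ∈ A', x i ≤ s → #A' ≤ #A)
    (hBsum : ∑ i ∈ univ.filter (x · ≤ t), x i ≤ s) :
    univ.filter (x · ≤ t) ⊆ A := by
  intro i hiB
  by_contra hiA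
  have hxi : x i ≤ t := (mem_filter.1 hiB).2
  have hinsert : insert i A ⊆ univ.filter (x · ≤ t) :=
    insert_subset hiB fun j hj =>
      mem_filter.2 ⟨mem_univ j, (le_of_mem_of_notMem_of_lowerClosed hA hj hiA).trans hxi⟩
  have hcard := hAmax _ <| (sum_le_sum_of_subset_of_nonneg hinsert fun j _ _ => hx j).trans hBsum
  rw [card_insert_of_notMem hiA] at hcard
  omega

lemma sum_add_mul_card_sub_card_le_sum [DecidableEq ι] [CommRing M] [PartialOrder M]
    [IsOrderedRing M] {B : Finset ι} {t : M} (hBA : B ⊆ A) (ht : ∀ i ∈ A \ B, t ≤ x i) :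
    ∑ i ∈ B, x i + t * (#A - #B : M) ≤ ∑ i ∈ A, x i := by
  have hsdiff : #(A \ B) • t ≤ ∑ i ∈ A \ B, x i := card_nsmul_le_sum _ _ _ ht
  rw [nsmul_eq_mul, cast_card_sdiff hBA] at hsdiff
  rw [← sum_sdiff hBA, mul_comm, add_comm]
  exact add_le_add_left hsdiff _

end

theorem bruss_robertson_case_B_le_A_general (n : ℕ) (x : Fin n → ℝ)
    (hpos : ∀ i, 0 ≤ x i) (s t : ℝ)
    (A : Finset (Fin n))
    (hAdc : ∀ i ∈ A, ∀ j : Fin n, (x j < x i ∨ (x j = x i ∧ j < i)) → j ∈ A)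
    (hAmax : ∀ A' : Finset (Fin n), ∑ i ∈ A', x i ≤ s → A'.card ≤ A.card)
    (B : Finset (Fin n)) (hB : B = Finset.univ.filter (fun i => x i ≤ t))
    (hBsum : ∑ i ∈ B, x i ≤ s) :
    B ⊆ A ∧ ∑ i ∈ B, x i + t * ((A.card : ℝ) - (B.card : ℝ)) ≤ ∑ i ∈ A, x i := by
  subst hB
  have hBA := filter_le_subset_of_lowerClosed_of_card_maximal hpos
    (fun i hi j hj => hAdc i hi j (Or.inl hj)) hAmax hBsum
  refine ⟨hBA, sum_add_mul_card_sub_card_le_sum hBA fun i hi => ?_⟩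
  have hti : ¬x i ≤ t := fun h => (mem_sdiff.1 hi).2 (mem_filter.2 ⟨Finset.mem_univ i, h⟩)
  exact (not_le.1 hti).le

/-- If `S_B ≤ S_A` where `A` is the greedy maximal initial segment (in the order `≺`)
with sum at most `s` and `B = {i : xᵢ ≤ t}` with `S_B ≤ s`, then `B ⊆ A` and
`S_B + t(|A| − |B|) ≤ S_A`. -/
theorem bruss_robertson_case_B_le_A (n : ℕ) (x : Fin n → ℝ)
    (hpos : ∀ i, 0 ≤ x i) (s t : ℝ) (hs : 0 < s) (ht : 0 < t)
    (A : Finset (Fin n))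
    (hAsum : ∑ i ∈ A, x i ≤ s)
    (hAdc : ∀ i ∈ A, ∀ j : Fin n, (x j < x i ∨ (x j = x i ∧ j < i)) → j ∈ A)
    (hAmax : ∀ A' : Finset (Fin n), ∑ i ∈ A', x i ≤ s → A'.card ≤ A.card)
    (B : Finset (Fin n)) (hB : B = Finset.univ.filter (fun i => x i ≤ t))
    (hBsum : ∑ i ∈ B, x i ≤ s)
    (hBA : ∑ i ∈ B, x i ≤ ∑ i ∈ A, x i) :
    B ⊆ A ∧ ∑ i ∈ B, x i + t * ((A.card : ℝ) - (B.card : ℝ)) ≤ ∑ i ∈ A, x i :=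
  bruss_robertson_case_B_le_A_general n x hpos s t A hAdc hAmax B hB hBsum
end
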